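/- arXiv:1310.1780 — 3 statements merged into one kernel-verified Lean document; each statement's English description precedes it below -/
import Mathlib

section
/- Let ε > 0 and let K ⊆ ℝ² be a compact convex set with B(ε) ⊆ K such that a ball of radius ε slides freely inside K. Let u ∈ ℝ² be a unit vector and let x ∈ ℝ² satisfy ⟨x,u⟩ = 0 and ‖x‖ ≤ 2ε. Let S ⊆ ℝ² be a finite set with 0 ∈ S and x ∈ S. Writing K_u⁺ = {y ∈ K : ⟨y,u⟩ ≥ 0}, B(ε)_u⁺ = {y ∈ B(ε) : ⟨y,u⟩ ≥ 0}, and [0,x] for the closed segment from 0 to x, one has V₂(([0,x] ⊕ K_u⁺) \ (S ⊕ K)) ≤ V₂(([0,x] ⊕ B(ε)_u⁺) \ (S ⊕ B(ε))). -/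
/-!
Let `c` be the centre of a sliding ball through a point of `K` where `⟪·, u⟫` is maximal, so that
`⟪·, u⟫ ≤ ⟪c, u⟫ + ε` on `K`. Translation by `-c` maps the left-hand set into the right-hand one.
Indeed, write `p = t • x + y` with `y ∈ K_u⁺`. As `0, x ∈ S`, the points `p` and `p - x` lie
outside the convex set `K`, so the chord of `K` through `y` parallel to `x` lies strictly between
them and is shorter than `‖x‖ ≤ 2ε`. Below the height of `c` this chord contains convex
combinations of `B(ε)` and `B(c, ε)` of length `2ε`; hence it passes through `B(c, ε)`, and the
point where it does exhibits `p - c` in `[0, x] ⊕ B(ε)_u⁺`.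
-/

open Pointwise MeasureTheory Metric

noncomputable section

/-- The plane `ℝ²`. -/
abbrev E2 := EuclideanSpace ℝ (Fin 2)

/-- `V₂`: Lebesgue measure (area) of a subset of `ℝ²`, as a real number. -/
def V2 (A : Set E2) : ℝ := (volume A).toReal

/-- A ball of radius `ε` slides freely inside `K` if every boundary point of `K`
is contained in a closed ball of radius `ε` that is contained in `K`. -/
def SlidesFreely (ε : ℝ) (K : Set E2) : Prop :=
  ∀ x ∈ frontier K, ∃ c : E2, x ∈ closedBall c ε ∧ closedBall c ε ⊆ K

open Set Module Filter Topology RealInnerProductSpace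

theorem Set.OrdConnected.subset_Ioo {α : Type*} [LinearOrder α] {s : Set α} (hs : s.OrdConnected)
    {a b t : α} (ha : a ∉ s) (hb : b ∉ s) (ht : t ∈ s) (hat : a ≤ t) (htb : t ≤ b) :
    s ⊆ Ioo a b := by
  intro r hr
  by_contra h
  rcases not_and_or.mp h with h | h
  · exact ha (hs.out hr ht ⟨not_lt.mp h, hat⟩)
  · exact hb (hs.out ht hr ⟨htb, not_lt.mp h⟩)

theorem isCompact_segment {E : Type*} [AddCommGroup E] [Module ℝ E] [TopologicalSpace E]
    [IsTopologicalAddGroup E] [ContinuousSMul ℝ E] (a b : E) : IsCompact (segment ℝ a b) :=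
  convexHull_pair (𝕜 := ℝ) a b ▸ (toFinite {a, b}).isCompact_convexHull (𝕜 := ℝ)

theorem mem_frontier_of_isMaxOn_inner {E : Type*} [NormedAddCommGroup E] [InnerProductSpace ℝ E]
    {K : Set E} (hK : IsClosed K) {u m : E} (hu : u ≠ 0) (hm : m ∈ K)
    (hmax : IsMaxOn (fun y => ⟪y, u⟫) K m) : m ∈ frontier K := by
  rw [hK.frontier_eq]
  refine ⟨hm, fun hint => ?_⟩
  have hto : Tendsto (fun δ : ℝ => m + δ • u) (𝓝[>] 0) (𝓝 m) :=
    ((by fun_prop : Continuous fun δ : ℝ => m + δ • u).tendsto' 0 m (by simp)).mono_left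
      nhdsWithin_le_nhds
  obtain ⟨δ, hδK, hδ⟩ :=
    ((hto.eventually (mem_interior_iff_mem_nhds.mp hint)).and self_mem_nhdsWithin).exists
  have hle : ⟪m + δ • u, u⟫ ≤ ⟪m, u⟫ := hmax hδK
  rw [inner_add_left, real_inner_smul_left, real_inner_self_eq_norm_sq] at hle
  have : 0 < δ * ‖u‖ ^ 2 := mul_pos hδ (pow_pos (norm_pos_iff.mpr hu) 2)
  linarith

theorem SlidesFreely.exists_closedBall_subset_inner_le {ε : ℝ} {K : Set E2}
    (hslide : SlidesFreely ε K) (hK : IsCompact K) (hne : K.Nonempty) {u : E2} (hu : ‖u‖ = 1) :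
    ∃ c, closedBall c ε ⊆ K ∧ ∀ y ∈ K, ⟪y, u⟫ ≤ ⟪c, u⟫ + ε := by
  obtain ⟨m, hmK, hmax⟩ := hK.exists_isMaxOn hne (f := fun y => ⟪y, u⟫) (by fun_prop)
  have hu0 : u ≠ 0 := norm_ne_zero_iff.mp (by simp [hu])
  obtain ⟨c, hmc, hcK⟩ := hslide m (mem_frontier_of_isMaxOn_inner hK.isClosed hu0 hmK hmax)
  refine ⟨c, hcK, fun y hy => (hmax hy).trans ?_⟩
  have : ⟪m - c, u⟫ ≤ ‖m - c‖ * ‖u‖ := real_inner_le_norm _ _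
  rw [inner_sub_left, hu, mul_one] at this
  linarith [mem_closedBall_iff_norm.mp hmc]

theorem Convex.setOf_sub_smul_mem_subset_Ioo {E : Type*} [AddCommGroup E] [Module ℝ E] {K : Set E}
    (hK : Convex ℝ K) {p x : E} {t : ℝ} (ht : t ∈ Icc (0 : ℝ) 1) (hy : p - t • x ∈ K) (hp : p ∉ K)
    (hpx : p - x ∉ K) : {r : ℝ | p - r • x ∈ K} ⊆ Ioo 0 1 := by
  have hline : {r : ℝ | p - r • x ∈ K} = AffineMap.lineMap p (p - x) ⁻¹' K := by
    ext r
    rw [mem_preimage, AffineMap.lineMap_apply_module, mem_ofPred_eq]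
    congr! 1
    module
  have hconv : Convex ℝ {r : ℝ | p - r • x ∈ K} := hline ▸ hK.affine_preimage _
  exact (convex_iff_ordConnected.mp hconv).subset_Ioo (by simpa) (by simpa) hy ht.1 ht.2

section InnerProductSpace

variable {E : Type*} [NormedAddCommGroup E] [InnerProductSpace ℝ E] {K : Set E} {u x p : E}

theorem Convex.exists_sub_eq_smul_of_inner_eq [Fact (finrank ℝ E = 2)] (hK : Convex ℝ K)
    (hu : u ≠ 0) (hx : x ≠ 0) (hxu : ⟪x, u⟫ = 0) {t : ℝ} (ht : t ∈ Icc (0 : ℝ) 1)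
    (hy : p - t • x ∈ K) (hp : p ∉ K) (hpx : p - x ∉ K) {q : E} (hq : q ∈ K)
    (hqu : ⟪q, u⟫ = ⟪p, u⟫) : ∃ r ∈ Ioo (0 : ℝ) 1, p - q = r • x := by
  obtain ⟨r, hr⟩ := Submodule.mem_span_singleton.mp <|
    Submodule.mem_span_singleton_of_inner_eq_zero_of_inner_eq_zero (u := p - q) hu hx
      (by rw [real_inner_comm, inner_sub_left, hqu, sub_self])
      (by rw [real_inner_comm, hxu])
  refine ⟨r, hK.setOf_sub_smul_mem_subset_Ioo ht hy hp hpx ?_, hr.symm⟩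
  rwa [mem_ofPred_eq, hr, sub_sub_cancel]

theorem Convex.inner_le_of_chord {c : E} {ε : ℝ} (hK : Convex ℝ K) (hε : 0 ≤ ε)
    (hball0 : closedBall 0 ε ⊆ K) (hballc : closedBall c ε ⊆ K) (hx : x ≠ 0) (hxu : ⟪x, u⟫ = 0)
    (hxε : ‖x‖ ≤ 2 * ε) (hpu : 0 ≤ ⟪p, u⟫)
    (hchord : ∀ q ∈ K, ⟪q, u⟫ = ⟪p, u⟫ → ∃ r ∈ Ioo (0 : ℝ) 1, p - q = r • x) :
    ⟪c, u⟫ ≤ ⟪p, u⟫ := by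
  by_contra! hlt
  have hcu : 0 < ⟪c, u⟫ := hpu.trans_lt hlt
  set lam := ⟪p, u⟫ / ⟪c, u⟫
  have hlam : lam * ⟪c, u⟫ = ⟪p, u⟫ := div_mul_cancel₀ _ hcu.ne'
  have hlam0 : 0 ≤ lam := div_nonneg hpu hcu.le
  have hlam1 : lam ≤ 1 := (div_le_one hcu).mpr hlt.le
  have hmem : ∀ v : E, ‖v‖ ≤ ε → ⟪v, u⟫ = 0 →
      ∃ r ∈ Ioo (0 : ℝ) 1, p - (lam • c + v) = r • x := by
    intro v hv hvu
    have hcomb := hK (hball0 (mem_closedBall_zero_iff.mpr hv))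
      (hballc (add_mem_closedBall_iff_norm.mpr hv)) (sub_nonneg.mpr hlam1) hlam0
      (sub_add_cancel 1 lam)
    refine hchord _ ?_ ?_
    · convert hcomb using 1
      module
    · rw [inner_add_left, real_inner_smul_left, hvu, hlam, add_zero]
  obtain ⟨w, hw, hwu⟩ : ∃ w : E, ‖w‖ = ε ∧ ⟪w, u⟫ = 0 := by
    refine ⟨(ε / ‖x‖) • x, ?_, by rw [real_inner_smul_left, hxu, mul_zero]⟩
    rw [norm_smul, Real.norm_eq_abs, abs_of_nonneg (by positivity),
      div_mul_cancel₀ _ (norm_ne_zero_iff.mpr hx)]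
  obtain ⟨r₁, hr₁, h₁⟩ := hmem w hw.le hwu
  obtain ⟨r₂, hr₂, h₂⟩ := hmem (-w) (by rw [norm_neg, hw]) (by rw [inner_neg_left, hwu, neg_zero])
  have h2w : (2 : ℝ) • w = (r₂ - r₁) • x := by linear_combination (norm := module) h₂ - h₁
  have hnorm := congrArg norm h2w
  rw [norm_smul, norm_smul, hw, Real.norm_two, Real.norm_eq_abs] at hnorm
  have : |r₂ - r₁| < 1 :=
    abs_sub_lt_iff.mpr ⟨by linarith [hr₁.1, hr₂.2], by linarith [hr₁.2, hr₂.1]⟩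
  nlinarith [norm_pos_iff.mpr hx]

theorem Convex.sub_mem_diff_of_mem_diff [Fact (finrank ℝ E = 2)] {S : Set E} {c : E} {ε : ℝ}
    (hK : Convex ℝ K) (hε : 0 ≤ ε) (hball0 : closedBall 0 ε ⊆ K) (hballc : closedBall c ε ⊆ K)
    (hmax : ∀ y ∈ K, ⟪y, u⟫ ≤ ⟪c, u⟫ + ε) (hu : ‖u‖ = 1) (hxu : ⟪x, u⟫ = 0)
    (hxε : ‖x‖ ≤ 2 * ε) (h0S : 0 ∈ S) (hxS : x ∈ S)
    (hp : p ∈ (segment ℝ 0 x + {y ∈ K | ⟪y, u⟫ ≥ 0}) \ (S + K)) :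
    p - c ∈ (segment ℝ 0 x + {y ∈ closedBall 0 ε | ⟪y, u⟫ ≥ 0}) \ (S + closedBall 0 ε) := by
  obtain ⟨⟨z, hz, y, ⟨hyK, hyu⟩, rfl⟩, hpS⟩ := hp
  obtain ⟨t, ht, rfl⟩ : ∃ t ∈ Icc (0 : ℝ) 1, t • x = z := by simpa [segment_eq_image'] using hz
  have hp : t • x + y ∉ K := fun h => hpS ⟨0, h0S, _, h, zero_add _⟩
  have hpx : t • x + y - x ∉ K := fun h => hpS ⟨x, hxS, _, h, add_sub_cancel _ _⟩
  have hx : x ≠ 0 := by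
    rintro rfl
    exact hp (by rwa [smul_zero, zero_add])
  have hpu : ⟪t • x + y, u⟫ = ⟪y, u⟫ := by
    rw [inner_add_left, real_inner_smul_left, hxu, mul_zero, zero_add]
  have hchord : ∀ q ∈ K, ⟪q, u⟫ = ⟪t • x + y, u⟫ → ∃ r ∈ Ioo (0 : ℝ) 1, t • x + y - q = r • x :=
    fun q hq hqu => hK.exists_sub_eq_smul_of_inner_eq (norm_ne_zero_iff.mp (by simp [hu])) hx hxu
      ht (by rwa [add_sub_cancel_left]) hp hpx hq hqu
  have hcp := hK.inner_le_of_chord hε hball0 hballc hx hxu hxε (hpu ▸ hyu) hchord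
  set δ := ⟪t • x + y, u⟫ - ⟪c, u⟫
  have hδ0 : 0 ≤ δ := sub_nonneg.mpr hcp
  have hδε : δ ≤ ε := by linarith [hmax y hyK]
  have hδu : ‖δ • u‖ ≤ ε := by rwa [norm_smul, hu, mul_one, Real.norm_of_nonneg hδ0]
  obtain ⟨r, hr, hpc⟩ := hchord (c + δ • u) (hballc (add_mem_closedBall_iff_norm.mpr hδu))
    (by rw [inner_add_left, real_inner_smul_left, real_inner_self_eq_norm_sq, hu]; ring)
  refine ⟨⟨r • x, ?_, δ • u, ⟨?_, ?_⟩, by linear_combination (norm := module) -hpc⟩, ?_⟩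
  · simpa [segment_eq_image'] using ⟨r, Ioo_subset_Icc_self hr, rfl⟩
  · exact mem_closedBall_zero_iff.mpr hδu
  · rwa [ge_iff_le, real_inner_smul_left, real_inner_self_eq_norm_sq, hu, one_pow, mul_one]
  · rintro ⟨v, hv, b, hb, hvb⟩
    have hcb : c + b ∈ K := hballc (add_mem_closedBall_iff_norm.mpr (mem_closedBall_zero_iff.mp hb))
    exact hpS ⟨v, hv, c + b, hcb, by linear_combination (norm := module) hvb⟩

end InnerProductSpace

theorem V2_le_of_forall_sub_mem {A B : Set E2} (c : E2) (hB : volume B ≠ ⊤)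
    (h : ∀ p ∈ A, p - c ∈ B) : V2 A ≤ V2 B := by
  refine ENNReal.toReal_mono hB ?_
  calc volume A ≤ volume ((· + -c) ⁻¹' B) :=
        measure_mono fun p hp => by simpa [← sub_eq_add_neg] using h p hp
    _ = volume B := measure_preimage_add_right _ _ _

theorem stmt_2_general (ε : ℝ) (hε : 0 < ε)
    (K : Set E2) (hKcomp : IsCompact K) (hKconv : Convex ℝ K)
    (hball : closedBall (0 : E2) ε ⊆ K) (hKslide : SlidesFreely ε K)
    (u : E2) (hu : ‖u‖ = 1)
    (x : E2) (hxu : (inner ℝ x u : ℝ) = 0) (hx : ‖x‖ ≤ 2 * ε)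
    (S : Set E2) (h0S : (0 : E2) ∈ S) (hxS : x ∈ S) :
    V2 ((segment ℝ (0 : E2) x + {y ∈ K | (inner ℝ y u : ℝ) ≥ 0}) \ (S + K)) ≤
      V2 ((segment ℝ (0 : E2) x + {y ∈ closedBall (0 : E2) ε | (inner ℝ y u : ℝ) ≥ 0}) \
        (S + closedBall (0 : E2) ε)) := by
  have : Fact (finrank ℝ E2 = 2) := ⟨finrank_euclideanSpace_fin⟩
  obtain ⟨c, hc, hmax⟩ := hKslide.exists_closedBall_subset_inner_le hKcomp
    ⟨0, hball (mem_closedBall_self hε.le)⟩ hu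
  have hcompact : IsCompact (segment ℝ (0 : E2) x + closedBall 0 ε) :=
    (isCompact_segment 0 x).add (isCompact_closedBall 0 ε)
  refine V2_le_of_forall_sub_mem c ?_ fun p hp =>
    hKconv.sub_mem_diff_of_mem_diff hε.le hball hc hmax hu hxu hx h0S hxS hp
  exact ((measure_mono (sdiff_subset.trans (add_subset_add_left (sep_subset _ _)))).trans_lt
    hcompact.measure_lt_top).ne

/-- The face-wise volume comparison from the proof of Lemma 1:
`V₂(([0,x] ⊕ K_u⁺) \ (S ⊕ K)) ≤ V₂(([0,x] ⊕ B(ε)_u⁺) \ (S ⊕ B(ε)))`. -/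
theorem stmt_2 (ε : ℝ) (hε : 0 < ε)
    (K : Set E2) (hKcomp : IsCompact K) (hKconv : Convex ℝ K)
    (hball : closedBall (0 : E2) ε ⊆ K) (hKslide : SlidesFreely ε K)
    (u : E2) (hu : ‖u‖ = 1)
    (x : E2) (hxu : (inner ℝ x u : ℝ) = 0) (hx : ‖x‖ ≤ 2 * ε)
    (S : Set E2) (hSfin : S.Finite) (h0S : (0 : E2) ∈ S) (hxS : x ∈ S) :
    V2 ((segment ℝ (0 : E2) x + {y ∈ K | (inner ℝ y u : ℝ) ≥ 0}) \ (S + K)) ≤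
      V2 ((segment ℝ (0 : E2) x + {y ∈ closedBall (0 : E2) ε | (inner ℝ y u : ℝ) ≥ 0}) \
        (S + closedBall (0 : E2) ε)) :=
  stmt_2_general ε hε K hKcomp hKconv hball hKslide u hu x hxu hx S h0S hxS

end
end

section
/- Let B₃ = {(0,0),(1,0)} and W₃ = {(0,1),(1,1)} in ℝ². Then for every v ∈ ℝ, (−h(B₃ ⊕ W̌₃, u_v))⁺ = (sin v − |cos v|)⁺, and ∫₀^{2π} (−h(B₃ ⊕ W̌₃, u_v))⁺ dv = 2√2 − 2. -/
/-!
The support function is additive under Minkowski sums and `h(Ǎ, n) = h(A, -n)`, so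
`h(B₃ ⊕ W̌₃, u_v) = h(B₃, u_v) + h(W₃, -u_v) = max(0, cos v) + max(-sin v, -cos v - sin v)
= |cos v| - sin v`. The integrand `(sin v - |cos v|)⁺` vanishes on `[π, 2π]` and is symmetric
under `v ↦ π - v`; on `[0, π/2]` it equals `(√2 sin (v - π/4))⁺`, whose integral is `√2 - 1`.
-/

open Pointwise MeasureTheory

noncomputable section

/-- The point `(x, y)` of `ℝ²`. -/
def pt (x y : ℝ) : E2 := (WithLp.equiv 2 (Fin 2 → ℝ)).symm ![x, y]

/-- The support function `h(A, n) = sup_{y ∈ A} ⟨y, n⟩`. -/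
def suppFn (A : Set E2) (n : E2) : ℝ := sSup ((fun y => (inner ℝ y n : ℝ)) '' A)

/-- The unit vector `u_v = (cos v, sin v)`. -/
def uv (v : ℝ) : E2 := pt (Real.cos v) (Real.sin v)

/-- Black pixels of the configuration `ξ₃` (class `η₃`). -/
def B3 : Set E2 := {pt 0 0, pt 1 0}

/-- White pixels of the configuration `ξ₃`. -/
def W3 : Set E2 := {pt 0 1, pt 1 1}

open Real

lemma pt_neg (a b : ℝ) : -pt a b = pt (-a) (-b) := by
  ext i; fin_cases i <;> simp [pt]

lemma inner_pt (a b c d : ℝ) : inner ℝ (pt a b) (pt c d) = a * c + b * d := by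
  simp [pt, PiLp.inner_apply, Fin.sum_univ_two, mul_comm]

lemma suppFn_eq_sSup_image_innerSL (A : Set E2) (n : E2) :
    suppFn A n = sSup (innerSL ℝ n '' A) := by
  simp only [suppFn, innerSL_apply_apply, real_inner_comm n]
  rfl

lemma suppFn_add {A B : Set E2} (n : E2) (hA : A.Nonempty) (hB : B.Nonempty)
    (hA_bdd : Bornology.IsBounded A) (hB_bdd : Bornology.IsBounded B) :
    suppFn (A + B) n = suppFn A n + suppFn B n := by
  have bdd {S : Set E2} (hS : Bornology.IsBounded S) : BddAbove (innerSL ℝ n '' S) :=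
    ((innerSL ℝ n).lipschitz.isBounded_image hS).bddAbove
  simp only [suppFn_eq_sSup_image_innerSL, Set.image_add]
  exact csSup_add (hA.image _) (bdd hA_bdd) (hB.image _) (bdd hB_bdd)

lemma suppFn_neg (A : Set E2) (n : E2) : suppFn (-A) n = suppFn A (-n) := by
  simp only [suppFn, ← Set.image_neg_eq_neg, Set.image_image, inner_neg_left, inner_neg_right]

lemma suppFn_pair (a b n : E2) : suppFn {a, b} n = max (inner ℝ a n) (inner ℝ b n) := by
  rw [suppFn, Set.image_pair, csSup_pair]

lemma suppFn_B3_add_neg_W3 (v : ℝ) :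
    suppFn (B3 + -W3) (uv v) = |cos v| - sin v := by
  have pair_bdd (a b : E2) : Bornology.IsBounded ({a, b} : Set E2) :=
    (Set.toFinite _).isBounded
  rw [B3, W3, suppFn_add (uv v) (Set.insert_nonempty _ _) (Set.insert_nonempty _ _).neg
    (pair_bdd _ _) (pair_bdd _ _).neg, suppFn_neg, suppFn_pair, suppFn_pair, uv, pt_neg]
  simp only [inner_pt]
  rcases le_total 0 (cos v) with h | h <;>
    simp [h, abs_of_nonneg, abs_of_nonpos, sub_eq_add_neg]

lemma sin_sub_cos_eq_sqrt_two_mul_sin (v : ℝ) : sin v - cos v = √2 * sin (v - π / 4) := by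
  rw [sin_sub, sin_pi_div_four, cos_pi_div_four]
  ring_nf
  rw [sq_sqrt zero_le_two]
  ring

lemma integral_max_sin_sub_cos_zero :
    ∫ v in (0 : ℝ)..π / 2, max (sin v - cos v) 0 = √2 - 1 := by
  have hpi := pi_pos
  have h_left : Set.EqOn (fun v => max (sin v - cos v) 0) 0 (Set.uIcc 0 (π / 4)) := by
    intro v hv
    rw [Set.uIcc_of_le (by linarith)] at hv
    have h_sin : sin (v - π / 4) ≤ 0 :=
      sin_nonpos_of_nonpos_of_neg_pi_le (by linarith [hv.2]) (by linarith [hv.1])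
    simp only [Pi.zero_apply, sin_sub_cos_eq_sqrt_two_mul_sin]
    exact max_eq_right (mul_nonpos_of_nonneg_of_nonpos (sqrt_nonneg 2) h_sin)
  have h_right : Set.EqOn (fun v => max (sin v - cos v) 0) (fun v => sin v - cos v)
      (Set.uIcc (π / 4) (π / 2)) := by
    intro v hv
    rw [Set.uIcc_of_le (by linarith)] at hv
    have h_sin : 0 ≤ sin (v - π / 4) :=
      sin_nonneg_of_nonneg_of_le_pi (by linarith [hv.1]) (by linarith [hv.2])
    simp only [sin_sub_cos_eq_sqrt_two_mul_sin]
    exact max_eq_left (mul_nonneg (sqrt_nonneg 2) h_sin)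
  have hint (a b : ℝ) : IntervalIntegrable (fun v => max (sin v - cos v) 0) volume a b :=
    ((continuous_sin.sub continuous_cos).max continuous_const).intervalIntegrable a b
  rw [← intervalIntegral.integral_add_adjacent_intervals (hint 0 (π / 4)) (hint _ _),
    intervalIntegral.integral_congr h_left, intervalIntegral.integral_congr h_right,
    intervalIntegral.integral_sub (continuous_sin.intervalIntegrable _ _)
      (continuous_cos.intervalIntegrable _ _),
    integral_sin, integral_cos, cos_pi_div_four, cos_pi_div_two, sin_pi_div_two, sin_pi_div_four]
  simp only [Pi.zero_apply, intervalIntegral.integral_zero]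
  ring

lemma integral_max_sin_sub_abs_cos_zero :
    ∫ v in (0 : ℝ)..2 * π, max (sin v - |cos v|) 0 = 2 * √2 - 2 := by
  have hpi := pi_pos
  set g : ℝ → ℝ := fun v => max (sin v - |cos v|) 0 with hg
  have hint (a b : ℝ) : IntervalIntegrable g volume a b :=
    ((continuous_sin.sub continuous_cos.abs).max continuous_const).intervalIntegrable a b
  have h_first : ∫ v in (0 : ℝ)..π / 2, g v = √2 - 1 := by
    rw [← integral_max_sin_sub_cos_zero]
    refine intervalIntegral.integral_congr fun v hv => ?_
    rw [Set.uIcc_of_le (by linarith)] at hv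
    simp only [hg, abs_of_nonneg (cos_nonneg_of_mem_Icc ⟨by linarith [hv.1], hv.2⟩)]
  have h_second : ∫ v in π / 2..π, g v = ∫ v in (0 : ℝ)..π / 2, g v := by
    have h_symm (v : ℝ) : g (π - v) = g v := by simp only [hg, sin_pi_sub, cos_pi_sub, abs_neg]
    calc ∫ v in π / 2..π, g v = ∫ v in (0 : ℝ)..π / 2, g (π - v) := by
          rw [intervalIntegral.integral_comp_sub_left g π, sub_zero, sub_half]
      _ = ∫ v in (0 : ℝ)..π / 2, g v := by simp only [h_symm]
  have h_lower : ∫ v in π..2 * π, g v = 0 := by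
    refine (intervalIntegral.integral_congr (g := 0) fun v hv => ?_).trans (by simp)
    rw [Set.uIcc_of_le (by linarith)] at hv
    have h_sin : 0 ≤ sin (v - π) :=
      sin_nonneg_of_nonneg_of_le_pi (by linarith [hv.1]) (by linarith [hv.2])
    rw [sin_sub_pi] at h_sin
    exact max_eq_right (by linarith [abs_nonneg (cos v)])
  rw [← intervalIntegral.integral_add_adjacent_intervals (hint 0 π) (hint _ _),
    ← intervalIntegral.integral_add_adjacent_intervals (hint 0 (π / 2)) (hint _ _),
    h_second, h_first, h_lower]
  ring

/-- From the proof of Theorem 3: `(−h(B₃ ⊕ W̌₃, u_v))⁺ = (sin v − |cos v|)⁺` for all `v`,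
and its integral over `[0, 2π]` equals `2√2 − 2`. -/
theorem stmt_10 :
    (∀ v : ℝ, max (-(suppFn (B3 + -W3) (uv v))) 0 = max (Real.sin v - |Real.cos v|) 0) ∧
      ∫ v in (0 : ℝ)..(2 * Real.pi), max (-(suppFn (B3 + -W3) (uv v))) 0 =
        2 * Real.sqrt 2 - 2 := by
  have h_pointwise (v : ℝ) :
      max (-(suppFn (B3 + -W3) (uv v))) 0 = max (Real.sin v - |Real.cos v|) 0 := by
    rw [suppFn_B3_add_neg_W3, neg_sub]
  refine ⟨h_pointwise, ?_⟩
  simp only [h_pointwise]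
  exact integral_max_sin_sub_abs_cos_zero

end
end

section
/- Let X ⊆ ℝ² be compact, let a > 0, let R : ℝ² → ℝ² be a rotation (linear isometry), and let c ∈ ℝ². Let C₀ = {(0,0),(1,0),(0,1),(1,1)} and for z ∈ ℤ² let P(z) = {aR(z + c + q) : q ∈ C₀} be the vertex set of the lattice cell indexed by z. Then the set Z = {z ∈ ℤ² : P(z) ∩ X ≠ ∅ and P(z) ⊄ X} is finite, and a² · card(Z) ≤ V₂(frontier(X) ⊕ closedBall(0, √2·a)), where V₂ is Lebesgue measure on ℝ² and ⊕ denotes Minkowski sum. -/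
open Pointwise MeasureTheory Metric

noncomputable section

/-- The embedding of `ℤ²` into `ℝ²`. -/
def latticePt (z : ℤ × ℤ) : E2 := pt (z.1 : ℝ) (z.2 : ℝ)

/-- The vertex set of the unit lattice square. -/
def C0 : Set E2 := {pt 0 0, pt 1 0, pt 0 1, pt 1 1}

/-- Vertex set of the `2×2` lattice cell indexed by `z ∈ ℤ²` in the lattice `aR(ℤ² + c)`. -/
def cellVerts (a : ℝ) (R : E2 ≃ₗᵢ[ℝ] E2) (c : E2) (z : ℤ × ℤ) : Set E2 :=
  (fun q => a • R (latticePt z + c + q)) '' C0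

/-! Index by `z` the half-open cells `a • R (latticePt z + c + [0,1)²)`: they are pairwise disjoint
and each has area `a²`. If the vertices of cell `z` lie on both sides of `X`, the segment joining
two of them meets `∂X` at a point of the closed cell, and since the unit square has diameter `√2`
the whole cell lies in the `√2·a`-tube around `∂X`. The tube is bounded, so comparing areas bounds
the number of mixed cells, and in particular makes it finite. -/

section UnitCube

variable {ι : Type*}

def unitCube (ι : Type*) : Set (EuclideanSpace ℝ ι) := {x | ∀ i, x i ∈ Set.Icc 0 1}

def unitCubeIco (ι : Type*) : Set (EuclideanSpace ℝ ι) := {x | ∀ i, x i ∈ Set.Ico 0 1}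

lemma unitCubeIco_subset_unitCube : unitCubeIco ι ⊆ unitCube ι :=
  fun _ hx i => Set.Ico_subset_Icc_self (hx i)

lemma convex_unitCube : Convex ℝ (unitCube ι) :=
  fun _ hx _ hy _ _ ha hb hab i => by simpa using convex_Icc 0 1 (hx i) (hy i) ha hb hab

lemma dist_le_sqrt_card_of_mem_unitCube [Fintype ι] {x y : EuclideanSpace ℝ ι}
    (hx : x ∈ unitCube ι) (hy : y ∈ unitCube ι) : dist x y ≤ √(Fintype.card ι) := by
  rw [EuclideanSpace.dist_eq]
  gcongr
  calc ∑ i, dist (x i) (y i) ^ 2 ≤ ∑ _i : ι, (1 : ℝ) := by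
        gcongr with i
        exact pow_le_one₀ dist_nonneg (Real.dist_le_of_mem_Icc_01 (hx i) (hy i))
    _ = Fintype.card ι := by simp

lemma unitCubeIco_eq_preimage_pi :
    unitCubeIco ι = (MeasurableEquiv.toLp 2 (ι → ℝ)).symm ⁻¹' Set.univ.pi fun _ => Set.Ico 0 1 := by
  ext x
  simp [unitCubeIco]

lemma measurableSet_unitCubeIco [Fintype ι] : MeasurableSet (unitCubeIco ι) := by
  rw [unitCubeIco_eq_preimage_pi]
  exact (MeasurableSet.univ_pi fun _ => measurableSet_Ico).preimage (MeasurableEquiv.measurable _)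

lemma volume_unitCubeIco [Fintype ι] : volume (unitCubeIco ι) = 1 := by
  rw [unitCubeIco_eq_preimage_pi,
    (EuclideanSpace.volume_preserving_symm_measurableEquiv_toLp ι).measure_preimage
      (MeasurableSet.univ_pi fun _ => measurableSet_Ico).nullMeasurableSet]
  simp [volume_pi_pi]

end UnitCube

section ScaledIsometry

variable {E : Type*} [NormedAddCommGroup E] [InnerProductSpace ℝ E] (a : ℝ) (R : E ≃ₗᵢ[ℝ] E) (w : E)

lemma dist_smul_map_add (x y : E) : dist (a • R (w + x)) (a • R (w + y)) = |a| * dist x y := by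
  rw [dist_smul₀, R.dist_map, dist_add_left, Real.norm_eq_abs]

lemma image_smul_map_add (s : Set E) :
    (fun x => a • R (w + x)) '' s = a • (R.symm ⁻¹' ((-w + ·) ⁻¹' s)) := by
  rw [← Set.image_add_left, ← R.image_eq_preimage_symm, ← Set.image_smul, Set.image_image,
    Set.image_image]

variable [FiniteDimensional ℝ E] [MeasurableSpace E] [BorelSpace E] {s : Set E}

lemma measurableSet_image_smul_map_add (hs : MeasurableSet s) :
    MeasurableSet ((fun x => a • R (w + x)) '' s) := by
  rw [image_smul_map_add]
  exact ((hs.preimage (measurable_const_add _)).preimage R.symm.continuous.measurable).const_smul₀ a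

lemma volume_image_smul_map_add (hs : MeasurableSet s) :
    volume ((fun x => a • R (w + x)) '' s) =
      ENNReal.ofReal (|a| ^ Module.finrank ℝ E) * volume s := by
  have hs' := (hs.preimage (measurable_const_add (-w))).nullMeasurableSet (μ := volume)
  rw [image_smul_map_add, Measure.addHaar_smul, abs_pow,
    R.symm.measurePreserving.measure_preimage hs', measure_preimage_add]

end ScaledIsometry

theorem IsPreconnected.inter_frontier_nonempty {α : Type*} [TopologicalSpace α] {s t : Set α}
    (hs : IsPreconnected s) (hst : (s ∩ t).Nonempty) (hst' : (s \ t).Nonempty) :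
    (s ∩ frontier t).Nonempty := by
  by_contra h
  have hint : ∀ x ∈ s, x ∈ closure t → x ∈ interior t :=
    fun x hx hxc => by_contra fun hxi => h ⟨x, hx, hxc, hxi⟩
  have hcover : s ⊆ interior t ∪ (closure t)ᶜ := fun x hx =>
    (em (x ∈ closure t)).imp (hint x hx) id
  obtain ⟨x, -, hxi, hxc⟩ := hs _ _ isOpen_interior isClosed_closure.isOpen_compl hcover
    (hst.imp fun x hx => ⟨hx.1, hint x hx.1 (subset_closure hx.2)⟩)
    (hst'.imp fun x hx => ⟨hx.1, fun hxc => hx.2 (interior_subset (hint x hx.1 hxc))⟩)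
  exact hxc (subset_closure (interior_subset hxi))

lemma volume_frontier_add_closedBall_ne_top {E : Type*} [NormedAddCommGroup E]
    [InnerProductSpace ℝ E] [FiniteDimensional ℝ E] [MeasurableSpace E] [BorelSpace E]
    {X : Set E} (hX : IsCompact X) (r : ℝ) : volume (frontier X + closedBall 0 r) ≠ ⊤ :=
  ((hX.isBounded.subset hX.isClosed.frontier_subset).add isBounded_closedBall).measure_lt_top.ne

open Function in
lemma encard_mul_le_measure_of_pairwise_disjoint {α ι : Type*} [MeasurableSpace α]
    (μ : Measure α) {A : ι → Set α} {S : Set ι} {T : Set α} {ε : ENNReal}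
    (hA : ∀ i, MeasurableSet (A i)) (hdisj : Pairwise (Disjoint on A))
    (hμ : ∀ i ∈ S, μ (A i) = ε) (hT : ∀ i ∈ S, A i ⊆ T) : S.encard * ε ≤ μ T :=
  calc S.encard * ε = ∑' i : S, μ (A i) := by
        rw [← ENNReal.tsum_set_const]
        exact tsum_congr fun i => (hμ i i.2).symm
    _ ≤ μ (⋃ i : S, A i) :=
        tsum_meas_le_meas_iUnion_of_disjoint μ (fun i => hA i)
          fun _ _ hij => hdisj (Subtype.coe_injective.ne hij)
    _ ≤ μ T := measure_mono (Set.iUnion_subset fun i => hT i i.2)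

lemma Set.finite_and_mul_ncard_le_of_encard_mul_le {ι : Type*} {S : Set ι} {r : ℝ}
    {m : ENNReal} (hr : 0 < r) (hm : m ≠ ⊤) (h : S.encard * ENNReal.ofReal r ≤ m) :
    S.Finite ∧ r * S.ncard ≤ m.toReal := by
  have hfin : S.Finite := by
    by_contra hinf
    rw [Set.encard_eq_top_iff.2 hinf, ENat.toENNReal_top,
      ENNReal.top_mul (ENNReal.ofReal_pos.2 hr).ne'] at h
    exact hm (top_le_iff.1 h)
  refine ⟨hfin, ?_⟩
  rw [← hfin.cast_ncard_eq] at h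
  have := ENNReal.toReal_mono hm h
  rwa [ENNReal.toReal_mul, ENat.toENNReal_coe, ENNReal.toReal_natCast,
    ENNReal.toReal_ofReal hr.le, mul_comm] at this

lemma C0_subset_unitCube : C0 ⊆ unitCube (Fin 2) := by
  rintro q (rfl | rfl | rfl | rfl) <;> intro i <;> fin_cases i <;> simp [pt]

lemma eq_of_latticePt_add_eq {z z' : ℤ × ℤ} {x x' : E2} (hx : x ∈ unitCubeIco (Fin 2))
    (hx' : x' ∈ unitCubeIco (Fin 2)) (h : latticePt z + x = latticePt z' + x') : z = z' := by
  have hcoord : ∀ i (n n' : ℤ), n + x i = n' + x' i → n = n' := fun i n n' hi => by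
    simpa [Int.floor_intCast_add, Int.floor_eq_zero_iff.2 (hx i), Int.floor_eq_zero_iff.2 (hx' i)]
      using congrArg Int.floor hi
  exact Prod.ext (hcoord 0 _ _ (by simpa [latticePt, pt] using congrArg (· 0) h))
    (hcoord 1 _ _ (by simpa [latticePt, pt] using congrArg (· 1) h))

section Cells

variable {a : ℝ} {R : E2 ≃ₗᵢ[ℝ] E2} {c : E2} {z : ℤ × ℤ} {X : Set E2}

def cell (a : ℝ) (R : E2 ≃ₗᵢ[ℝ] E2) (c : E2) (z : ℤ × ℤ) : Set E2 :=
  (fun x => a • R (latticePt z + c + x)) '' unitCubeIco (Fin 2)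

def mixedCells (X : Set E2) (a : ℝ) (R : E2 ≃ₗᵢ[ℝ] E2) (c : E2) : Set (ℤ × ℤ) :=
  {z | (cellVerts a R c z ∩ X).Nonempty ∧ ¬ cellVerts a R c z ⊆ X}

lemma measurableSet_cell : MeasurableSet (cell a R c z) :=
  measurableSet_image_smul_map_add a R _ measurableSet_unitCubeIco

lemma volume_cell : volume (cell a R c z) = ENNReal.ofReal (a ^ 2) := by
  rw [cell, volume_image_smul_map_add a R _ measurableSet_unitCubeIco, volume_unitCubeIco,
    finrank_euclideanSpace_fin, sq_abs, mul_one]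

open Function in
lemma pairwise_disjoint_cell (ha : a ≠ 0) : Pairwise (Disjoint on cell a R c) := by
  intro z z' hne
  rw [onFun, Set.disjoint_left]
  rintro _ ⟨x, hx, rfl⟩ ⟨x', hx', h⟩
  have h' := R.injective (smul_right_injective E2 ha h)
  exact hne (eq_of_latticePt_add_eq hx hx' (by simpa [add_right_comm _ c] using h'.symm))

lemma exists_mem_unitCube_mem_frontier (hz : z ∈ mixedCells X a R c) :
    ∃ y ∈ unitCube (Fin 2), a • R (latticePt z + c + y) ∈ frontier X := by
  obtain ⟨⟨_, ⟨q, hq, rfl⟩, hqX⟩, hns⟩ := hz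
  obtain ⟨_, ⟨q', hq', rfl⟩, hq'X⟩ := Set.not_subset.1 hns
  set f := fun x => a • R (latticePt z + c + x)
  have hconn : IsPreconnected (f '' segment ℝ q q') :=
    (convex_segment q q').isPreconnected.image f (by fun_prop : Continuous f).continuousOn
  obtain ⟨_, ⟨y, hy, rfl⟩, hyX⟩ := hconn.inter_frontier_nonempty
    ⟨f q, Set.mem_image_of_mem f (left_mem_segment ℝ q q'), hqX⟩
    ⟨f q', Set.mem_image_of_mem f (right_mem_segment ℝ q q'), hq'X⟩
  exact ⟨y, convex_unitCube.segment_subset (C0_subset_unitCube hq) (C0_subset_unitCube hq') hy, hyX⟩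

lemma cell_subset_frontier_add_closedBall (ha : 0 ≤ a) (hz : z ∈ mixedCells X a R c) :
    cell a R c z ⊆ frontier X + closedBall 0 (√2 * a) := by
  obtain ⟨y, hy, hyX⟩ := exists_mem_unitCube_mem_frontier hz
  rintro _ ⟨x, hx, rfl⟩
  have hdist : dist (a • R (latticePt z + c + x)) (a • R (latticePt z + c + y)) ≤ √2 * a := by
    rw [dist_smul_map_add, abs_of_nonneg ha, mul_comm]
    gcongr
    simpa using dist_le_sqrt_card_of_mem_unitCube (unitCubeIco_subset_unitCube hx) hy
  exact ⟨_, hyX, _, by rwa [mem_closedBall_zero_iff, ← dist_eq_norm], add_sub_cancel _ _⟩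

end Cells

/-- The counting bound behind Lemma 2 of the paper: the set of lattice cells whose vertex
configuration is of a mixed type (meeting both `X` and its complement) is finite, and its
cardinality times `a²` is bounded by the area of the `√2·a`-tube around `∂X`. -/
theorem stmt_13 (X : Set E2) (hX : IsCompact X) (a : ℝ) (ha : 0 < a)
    (R : E2 ≃ₗᵢ[ℝ] E2) (c : E2) :
    {z : ℤ × ℤ | (cellVerts a R c z ∩ X).Nonempty ∧ ¬ cellVerts a R c z ⊆ X}.Finite ∧
      a ^ 2 * ({z : ℤ × ℤ | (cellVerts a R c z ∩ X).Nonempty ∧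
            ¬ cellVerts a R c z ⊆ X}.ncard : ℝ) ≤
        (volume (frontier X + closedBall (0 : E2) (Real.sqrt 2 * a))).toReal := by
  have hcount : (mixedCells X a R c).encard * ENNReal.ofReal (a ^ 2) ≤
      volume (frontier X + closedBall (0 : E2) (√2 * a)) :=
    encard_mul_le_measure_of_pairwise_disjoint volume (fun _ => measurableSet_cell)
      (pairwise_disjoint_cell ha.ne') (fun _ _ => volume_cell)
      (fun _ hz => cell_subset_frontier_add_closedBall ha.le hz)
  exact Set.finite_and_mul_ncard_le_of_encard_mul_le (by positivity)
    (volume_frontier_add_closedBall_ne_top hX _) hcount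

end
end
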